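/- For any symmetric matrix W ∈ ℝ^{d×d}, the minimum of ‖U‖_F² + ‖V‖_F² over all U, V ∈ ℝ^{d×d} with U Uᵀ − V Vᵀ = W equals the nuclear norm ‖W‖_*. -/

import Mathlib

open Finset Matrix

/-!
Write `W = Q Λ Qᵀ` with `Q` orthogonal. For `S = Q sign(Λ) Qᵀ` one has `tr (S W) = ∑ |λᵢ|`, while
`|tr (S M Mᵀ)| ≤ ‖M‖_F²` because the eigenvalues of `S` lie in `[-1, 1]`; applied to `W = U Uᵀ - V Vᵀ`
this gives the lower bound. It is attained by `U = Q √Λ⁺`, `V = Q √Λ⁻`.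
-/

namespace Matrix

lemma trace_mul_transpose_self {m n : Type*} [Fintype m] [Fintype n] (N : Matrix n m ℝ) :
    (N * Nᵀ).trace = ∑ i, ∑ j, N i j ^ 2 := by
  simp [trace, mul_apply, sq]

lemma mul_diagonal_mul_transpose_self {m n : Type*} [Fintype n] [DecidableEq n]
    (Q : Matrix m n ℝ) (f : n → ℝ) :
    Q * diagonal f * (Q * diagonal f)ᵀ = Q * diagonal (f * f) * Qᵀ := by
  rw [transpose_mul, diagonal_transpose, ← Matrix.mul_assoc, Matrix.mul_assoc Q,
    diagonal_mul_diagonal]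
  rfl

variable {m n : Type*} [Fintype m] [Fintype n] [DecidableEq n]

lemma trace_diagonal_mul_mul_transpose (s : n → ℝ) (N : Matrix n m ℝ) :
    (diagonal s * (N * Nᵀ)).trace = ∑ i, s i * ∑ j, N i j ^ 2 := by
  simp only [trace, diag, diagonal_mul]
  simp [mul_apply, sq]

variable {Q : Matrix n n ℝ}

lemma conj_diagonal_mul_conj_diagonal (hQ : Qᵀ * Q = 1) (s t : n → ℝ) :
    Q * diagonal s * Qᵀ * (Q * diagonal t * Qᵀ) = Q * diagonal (s * t) * Qᵀ := by
  calc Q * diagonal s * Qᵀ * (Q * diagonal t * Qᵀ) = Q * (diagonal s * diagonal t) * Qᵀ := by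
        simp only [Matrix.mul_assoc, ← Matrix.mul_assoc Qᵀ, hQ, Matrix.one_mul]
    _ = Q * diagonal (s * t) * Qᵀ := by rw [diagonal_mul_diagonal]; rfl

lemma trace_conj_diagonal (hQ : Qᵀ * Q = 1) (s : n → ℝ) :
    (Q * diagonal s * Qᵀ).trace = ∑ i, s i := by
  rw [trace_mul_comm, ← Matrix.mul_assoc, hQ, Matrix.one_mul, trace_diagonal]

lemma abs_trace_conj_diagonal_mul_mul_transpose_le (hQ : Qᵀ * Q = 1) {s : n → ℝ}
    (hs : ∀ i, |s i| ≤ 1) (M : Matrix n m ℝ) :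
    |(Q * diagonal s * Qᵀ * (M * Mᵀ)).trace| ≤ ∑ i, ∑ j, M i j ^ 2 := by
  have hQ' : Q * Qᵀ = 1 := mul_eq_one_comm.mp hQ
  have hrot : ∀ t : n → ℝ, (Q * diagonal t * Qᵀ * (M * Mᵀ)).trace =
      (diagonal t * ((Qᵀ * M) * (Qᵀ * M)ᵀ)).trace := by
    intro t
    simp only [transpose_mul, transpose_transpose, Matrix.mul_assoc]
    rw [trace_mul_comm Q]
    simp only [Matrix.mul_assoc]
  calc |(Q * diagonal s * Qᵀ * (M * Mᵀ)).trace|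
      = |∑ i, s i * ∑ j, (Qᵀ * M) i j ^ 2| := by
        rw [hrot, trace_diagonal_mul_mul_transpose]
    _ ≤ ∑ i, ∑ j, (Qᵀ * M) i j ^ 2 := by
        refine (abs_sum_le_sum_abs _ _).trans (sum_le_sum fun i _ => ?_)
        rw [abs_mul, abs_of_nonneg (sum_nonneg fun j _ => sq_nonneg ((Qᵀ * M) i j))]
        exact mul_le_of_le_one_left (sum_nonneg fun j _ => sq_nonneg _) (hs i)
    _ = ∑ i, ∑ j, M i j ^ 2 := by
        simpa [diagonal_one, hQ', ← trace_mul_transpose_self] using (hrot 1).symm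

lemma IsHermitian.exists_orthogonal_conj_diagonal {W : Matrix n n ℝ} (hW : W.IsHermitian) :
    ∃ Q : Matrix n n ℝ, Qᵀ * Q = 1 ∧ W = Q * diagonal hW.eigenvalues * Qᵀ := by
  refine ⟨hW.eigenvectorUnitary, ?_, ?_⟩
  · simpa [star_eq_conjTranspose] using mem_unitaryGroup_iff'.mp hW.eigenvectorUnitary.2
  · simpa [Unitary.conjStarAlgAut_apply, star_eq_conjTranspose, Function.comp_def]
      using hW.spectral_theorem

end Matrix

/-- For a symmetric (Hermitian) real matrix `W`, the minimum of `‖U‖_F² + ‖V‖_F²`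
over all `U, V` with `U Uᵀ − V Vᵀ = W` equals the nuclear norm of `W`, i.e. the sum
of the absolute values of its eigenvalues. -/
theorem stmt10 (d : ℕ) (W : Matrix (Fin d) (Fin d) ℝ) (hW : W.IsHermitian) :
    IsLeast {r : ℝ | ∃ U V : Matrix (Fin d) (Fin d) ℝ,
        U * Uᵀ - V * Vᵀ = W ∧
        r = (∑ i, ∑ j, U i j ^ 2) + ∑ i, ∑ j, V i j ^ 2}
      (∑ i, |hW.eigenvalues i|) := by
  obtain ⟨Q, hQ, hWQ⟩ := hW.exists_orthogonal_conj_diagonal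
  set ev := hW.eigenvalues
  constructor
  · refine ⟨Q * diagonal (fun i => √(ev i)⁺), Q * diagonal (fun i => √(ev i)⁻), ?_, ?_⟩
    · rw [mul_diagonal_mul_transpose_self, mul_diagonal_mul_transpose_self, ← sub_mul, ← mul_sub,
        diagonal_sub, hWQ]
      congr
      ext i
      simp [Real.mul_self_sqrt, posPart_sub_negPart]
    · rw [← trace_mul_transpose_self, ← trace_mul_transpose_self, mul_diagonal_mul_transpose_self,
        mul_diagonal_mul_transpose_self, trace_conj_diagonal hQ, trace_conj_diagonal hQ,
        ← sum_add_distrib]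
      simp [Real.mul_self_sqrt, posPart_add_negPart]
  · rintro r ⟨U, V, hUV, rfl⟩
    set S := Q * diagonal (fun i => (SignType.sign (ev i) : ℝ)) * Qᵀ
    have hs : ∀ i, |(SignType.sign (ev i) : ℝ)| ≤ 1 := fun i => by
      cases SignType.sign (ev i) <;> simp
    have hU := abs_le.mp (abs_trace_conj_diagonal_mul_mul_transpose_le hQ hs U)
    have hV := abs_le.mp (abs_trace_conj_diagonal_mul_mul_transpose_le hQ hs V)
    calc ∑ i, |ev i| = (S * W).trace := by
          rw [hWQ, conj_diagonal_mul_conj_diagonal hQ, trace_conj_diagonal hQ]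
          simp [sign_mul_self]
      _ = (S * (U * Uᵀ)).trace - (S * (V * Vᵀ)).trace := by rw [← hUV, Matrix.mul_sub, trace_sub]
      _ ≤ _ := by linarith
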